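/- arXiv:2112.07756 — 5 statements merged into one kernel-verified Lean document; each statement's English description precedes it below -/
import Mathlib

section
/- Let n ≥ 1 and let d_0, …, d_n be nonnegative reals satisfying d_i = d_{n-i} for all i and d_i ≤ d_{i+1} for 0 ≤ i < ⌈n/2⌉ (symmetric and unimodal). Then the function z ↦ ∑_{i=0}^{n-z} d_i d_{i+z} is monotonically non-increasing in z for 0 ≤ z ≤ n. -/
noncomputable def cseq (d : ℕ → ℝ) : ℕ → ℝ
  | 0 => d 0
  | k+1 => d (k+1) - d k

lemma cseq_sum (d : ℕ → ℝ) (i : ℕ) : ∑ k ∈ Finset.range (i+1), cseq d k = d i := by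
  induction i with
  | zero => simp [cseq]
  | succ i ih => rw [Finset.sum_range_succ, ih]; simp [cseq]

lemma sum_ite_le (f : ℕ → ℝ) (j N : ℕ) (h : j + 1 ≤ N) :
    ∑ k ∈ Finset.range N, (if k ≤ j then f k else 0) = ∑ k ∈ Finset.range (j+1), f k := by
  rw [← Finset.sum_subset (Finset.range_subset_range.mpr h)
      (fun k _ hk => if_neg (by simp at hk; omega))]
  exact Finset.sum_congr rfl fun k hk => if_pos (by simp at hk; omega)

lemma cseq_repr (n : ℕ) (d : ℕ → ℝ) (hsymm : ∀ i, i ≤ n → d i = d (n-i))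
    (i : ℕ) (hi : i ≤ n) :
    d i = ∑ k ∈ Finset.range (n/2 + 1),
      (if k ≤ i ∧ i + k ≤ n then cseq d k else 0) := by
  have hdj : d i = d (min i (n - i)) := by
    rcases le_total i (n - i) with h | h
    · rw [min_eq_left h]
    · rw [min_eq_right h, ← hsymm i hi]
  have hcond : ∀ k, (if k ≤ i ∧ i + k ≤ n then cseq d k else 0)
      = (if k ≤ min i (n - i) then cseq d k else 0) := by
    intro k
    by_cases h : k ≤ min i (n - i)
    · rw [if_pos (by omega), if_pos h]
    · rw [if_neg (by omega), if_neg h]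
  calc d i = d (min i (n - i)) := hdj
    _ = ∑ k ∈ Finset.range (min i (n-i) + 1), cseq d k := (cseq_sum d _).symm
    _ = ∑ k ∈ Finset.range (n/2 + 1), (if k ≤ min i (n - i) then cseq d k else 0) :=
        (sum_ite_le (cseq d) _ _ (by omega)).symm
    _ = _ := by exact Finset.sum_congr rfl fun k _ => (hcond k).symm

theorem unimodal_overlap_antitone (n : ℕ) (hn : 1 ≤ n) (d : ℕ → ℝ)
    (hpos : ∀ i, i ≤ n → 0 ≤ d i)
    (hsymm : ∀ i, i ≤ n → d i = d (n - i))
    (hmono : ∀ i, i < (n + 1) / 2 → d i ≤ d (i + 1)) :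
    ∀ z₁ z₂ : ℕ, z₁ ≤ z₂ → z₂ ≤ n →
      ∑ i ∈ Finset.range (n - z₂ + 1), d i * d (i + z₂) ≤
        ∑ i ∈ Finset.range (n - z₁ + 1), d i * d (i + z₁) := by
  intro z₁ z₂ hz hzn
  have hcpos : ∀ k ∈ Finset.range (n/2+1), 0 ≤ cseq d k := by
    intro k hk
    simp only [Finset.mem_range] at hk
    cases k with
    | zero => simpa [cseq] using hpos 0 (by omega)
    | succ k => simp only [cseq]; exact sub_nonneg.mpr (hmono k (by omega))
  have key : ∀ z, z ≤ n → ∑ i ∈ Finset.range (n - z + 1), d i * d (i + z)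
      = ∑ k ∈ Finset.range (n/2+1), ∑ l ∈ Finset.range (n/2+1),
          cseq d k * cseq d l *
          (((Finset.range (n - z + 1)).filter
            (fun i => (k ≤ i ∧ i + k ≤ n) ∧ (l ≤ i + z ∧ i + z + l ≤ n))).card : ℝ) := by
    intro z hzle
    have h1 : ∀ i ∈ Finset.range (n - z + 1), d i * d (i+z)
        = ∑ k ∈ Finset.range (n/2+1), ∑ l ∈ Finset.range (n/2+1),
            (if (k ≤ i ∧ i + k ≤ n) ∧ (l ≤ i + z ∧ i + z + l ≤ n)
              then cseq d k * cseq d l else 0) := by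
      intro i hi
      simp only [Finset.mem_range] at hi
      rw [cseq_repr n d hsymm i (by omega), cseq_repr n d hsymm (i+z) (by omega),
          Finset.sum_mul_sum]
      refine Finset.sum_congr rfl fun k _ => Finset.sum_congr rfl fun l _ => ?_
      by_cases hA : k ≤ i ∧ i + k ≤ n <;> by_cases hB : l ≤ i + z ∧ i + z + l ≤ n <;>
        simp [hA, hB]
    rw [Finset.sum_congr rfl h1, Finset.sum_comm]
    refine Finset.sum_congr rfl fun k _ => ?_
    rw [Finset.sum_comm]
    refine Finset.sum_congr rfl fun l _ => ?_
    rw [← Finset.sum_filter, Finset.sum_const, nsmul_eq_mul, mul_comm]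
  have hcard : ∀ k l : ℕ, k ≤ n/2 → l ≤ n/2 →
      ((Finset.range (n - z₂ + 1)).filter
        (fun i => (k ≤ i ∧ i + k ≤ n) ∧ (l ≤ i + z₂ ∧ i + z₂ + l ≤ n))).card
      ≤ ((Finset.range (n - z₁ + 1)).filter
        (fun i => (k ≤ i ∧ i + k ≤ n) ∧ (l ≤ i + z₁ ∧ i + z₁ + l ≤ n))).card := by
    intro k l hk hl
    have hIcc : ∀ z, z ≤ n → l + z ≤ n →
        (Finset.range (n - z + 1)).filter
          (fun i => (k ≤ i ∧ i + k ≤ n) ∧ (l ≤ i + z ∧ i + z + l ≤ n))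
        = Finset.Icc (max k (l - z)) (min (n - k) (n - l - z)) := by
      intro z hz1 hz2
      ext i
      simp only [Finset.mem_filter, Finset.mem_range, Finset.mem_Icc, le_min_iff, max_le_iff]
      omega
    rcases le_or_gt (l + z₂) n with h | h
    · rw [hIcc z₂ hzn h, hIcc z₁ (le_trans hz hzn) (by omega), Nat.card_Icc, Nat.card_Icc]
      omega
    · have h0 : ((Finset.range (n - z₂ + 1)).filter
          (fun i => (k ≤ i ∧ i + k ≤ n) ∧ (l ≤ i + z₂ ∧ i + z₂ + l ≤ n))).card = 0 := by
        rw [Finset.card_eq_zero, Finset.filter_eq_empty_iff]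
        intro i _
        omega
      rw [h0]
      exact Nat.zero_le _
  rw [key z₁ (le_trans hz hzn), key z₂ hzn]
  refine Finset.sum_le_sum fun k hk => Finset.sum_le_sum fun l hl => ?_
  have hc := hcard k l (Nat.lt_succ_iff.mp (Finset.mem_range.mp hk))
      (Nat.lt_succ_iff.mp (Finset.mem_range.mp hl))
  exact mul_le_mul_of_nonneg_left (Nat.cast_le.mpr hc)
    (mul_nonneg (hcpos k hk) (hcpos l hl))
end

section
/- For every natural number ℓ ≥ 10, with d_j = (1-λ)(ℓ+1+ℓj-j²) + λ(ℓ+2)²/4 and λ = 2(√2-1)/ℓ, the ratio ((ℓ+1)·∑_{i=0}^{ℓ} d_i²) / (∑_{i=0}^{ℓ} d_i)² is at most 6/5. -/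
/-!
Write `d i = A + B * i * (ℓ - i)` with `B = 1 - λ` and `A = (ℓ + 1) B + λ (ℓ + 2)² / 4`.
With `N = ℓ + 1`, the power sums of `i (ℓ - i)` over `0 ≤ i ≤ ℓ` give
`6 (∑ d)² - 5 N ∑ d² = N² (A² + (ℓ - 1) ℓ / 6 · B (2A - N B))`,
which is nonnegative as soon as `0 ≤ B` and `N B ≤ 2A`, i.e. as soon as `0 ≤ λ ≤ 1`.
The constant `6/5` is the limit `∫ x²(1-x)² / (∫ x(1-x))²` of the pure parabola `A = 0`.
-/

open Finset

lemma sum_range_mul_sub (x : ℝ) (m : ℕ) :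
    ∑ i ∈ range m, (i : ℝ) * (x - i) =
      x * (m * (m - 1) / 2) - m * (m - 1) * (2 * m - 1) / 6 := by
  induction m with
  | zero => simp
  | succ m ih => rw [sum_range_succ, ih]; push_cast; ring

lemma sum_range_mul_sub_sq (x : ℝ) (m : ℕ) :
    ∑ i ∈ range m, ((i : ℝ) * (x - i)) ^ 2 =
      x ^ 2 * (m * (m - 1) * (2 * m - 1) / 6) - 2 * x * (m ^ 2 * (m - 1) ^ 2 / 4)
        + m * (m - 1) * (2 * m - 1) * (3 * m ^ 2 - 3 * m - 1) / 30 := by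
  induction m with
  | zero => simp
  | succ m ih => rw [sum_range_succ, ih]; push_cast; ring

lemma sum_range_succ_mul_sub (ℓ : ℕ) :
    ∑ i ∈ range (ℓ + 1), (i : ℝ) * (ℓ - i) = (ℓ - 1) * ℓ * (ℓ + 1) / 6 := by
  rw [sum_range_mul_sub]; push_cast; ring

lemma sum_range_succ_mul_sub_sq (ℓ : ℕ) :
    ∑ i ∈ range (ℓ + 1), ((i : ℝ) * (ℓ - i)) ^ 2 =
      (ℓ - 1) * ℓ * (ℓ + 1) * (ℓ ^ 2 + 1) / 30 := by
  rw [sum_range_mul_sub_sq]; push_cast; ring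

theorem second_moment_ratio_le_of_affine_parabola (ℓ : ℕ) {A B : ℝ} (hB : 0 ≤ B)
    (hAB : (ℓ + 1) * B ≤ 2 * A) :
    ((ℓ : ℝ) + 1) * (∑ i ∈ range (ℓ + 1), (A + B * (i * (ℓ - i))) ^ 2) /
        (∑ i ∈ range (ℓ + 1), (A + B * (i * (ℓ - i)))) ^ 2 ≤ 6 / 5 := by
  have hsum : ∑ i ∈ range (ℓ + 1), (A + B * (i * (ℓ - i))) =
      (ℓ + 1) * A + B * ((ℓ - 1) * ℓ * (ℓ + 1) / 6) := by
    rw [sum_add_distrib, ← mul_sum, sum_range_succ_mul_sub]; simp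
  have hsum_sq : ∑ i ∈ range (ℓ + 1), (A + B * (i * (ℓ - i))) ^ 2 =
      (ℓ + 1) * A ^ 2 + 2 * A * B * ((ℓ - 1) * ℓ * (ℓ + 1) / 6)
        + B ^ 2 * ((ℓ - 1) * ℓ * (ℓ + 1) * (ℓ ^ 2 + 1) / 30) := by
    have hterm : ∀ t : ℝ, (A + B * t) ^ 2 = A ^ 2 + 2 * A * B * t + B ^ 2 * t ^ 2 :=
      fun t => by ring
    simp only [hterm, sum_add_distrib, ← mul_sum, sum_range_succ_mul_sub,
      sum_range_succ_mul_sub_sq]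
    simp
  have hdefect : 6 * (∑ i ∈ range (ℓ + 1), (A + B * (i * (ℓ - i)))) ^ 2
      - 5 * (ℓ + 1) * ∑ i ∈ range (ℓ + 1), (A + B * (i * (ℓ - i))) ^ 2 =
      (ℓ + 1) ^ 2 * (A ^ 2 + (ℓ - 1) * ℓ / 6 * (B * (2 * A - (ℓ + 1) * B))) := by
    rw [hsum, hsum_sq]; ring
  have hℓ : 0 ≤ ((ℓ : ℝ) - 1) * ℓ := by
    rcases ℓ with _ | ℓ
    · simp
    · push_cast; nlinarith
  have hdefect_nonneg :
      0 ≤ ((ℓ : ℝ) + 1) ^ 2 * (A ^ 2 + (ℓ - 1) * ℓ / 6 * (B * (2 * A - (ℓ + 1) * B))) := by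
    have := mul_nonneg hB (sub_nonneg.2 hAB)
    positivity
  apply div_le_of_le_mul₀ (sq_nonneg _) (by norm_num)
  linarith

lemma two_mul_sqrt_two_sub_one_le_one : 2 * (Real.sqrt 2 - 1) ≤ 1 := by
  nlinarith [Real.sq_sqrt (show (0 : ℝ) ≤ 2 by norm_num), Real.sqrt_nonneg 2]

lemma div_natCast_mem_Icc {c : ℝ} (hc : c ∈ Set.Icc 0 1) (n : ℕ) :
    c / n ∈ Set.Icc 0 1 := by
  rcases n.eq_zero_or_pos with rfl | hn
  · simp
  · exact ⟨div_nonneg hc.1 n.cast_nonneg,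
      div_le_one_of_le₀ (hc.2.trans (by exact_mod_cast hn)) n.cast_nonneg⟩

theorem second_moment_ratio_bound_general (ℓ : ℕ) :
    let lam : ℝ := 2 * (Real.sqrt 2 - 1) / (ℓ : ℝ)
    let d : ℕ → ℝ := fun i =>
      (1 - lam) * ((ℓ : ℝ) + 1 + (ℓ : ℝ) * (i : ℝ) - (i : ℝ) ^ 2) + lam * ((ℓ : ℝ) + 2) ^ 2 / 4
    ((ℓ : ℝ) + 1) * (∑ i ∈ Finset.range (ℓ + 1), (d i) ^ 2) /
        (∑ i ∈ Finset.range (ℓ + 1), d i) ^ 2 ≤ 6 / 5 := by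
  intro lam d
  obtain ⟨hlam₀, hlam₁⟩ : lam ∈ Set.Icc 0 1 :=
    div_natCast_mem_Icc ⟨by simp [Real.le_sqrt], two_mul_sqrt_two_sub_one_le_one⟩ ℓ
  have hd : ∀ i, d i = ((1 - lam) * (ℓ + 1) + lam * (ℓ + 2) ^ 2 / 4)
      + (1 - lam) * (i * (ℓ - i)) := fun i => by ring
  simp only [hd]
  refine second_moment_ratio_le_of_affine_parabola ℓ (sub_nonneg.2 hlam₁) ?_
  nlinarith [mul_nonneg hlam₀ (sq_nonneg (ℓ : ℝ))]

theorem second_moment_ratio_bound (ℓ : ℕ) (hℓ : 10 ≤ ℓ) :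
    let lam : ℝ := 2 * (Real.sqrt 2 - 1) / (ℓ : ℝ)
    let d : ℕ → ℝ := fun i =>
      (1 - lam) * ((ℓ : ℝ) + 1 + (ℓ : ℝ) * (i : ℝ) - (i : ℝ) ^ 2) + lam * ((ℓ : ℝ) + 2) ^ 2 / 4
    ((ℓ : ℝ) + 1) * (∑ i ∈ Finset.range (ℓ + 1), (d i) ^ 2) /
        (∑ i ∈ Finset.range (ℓ + 1), d i) ^ 2 ≤ 6 / 5 :=
  second_moment_ratio_bound_general ℓ
end

section
/- With c_j = ℓ + (ℓ-1)j - j² (0 ≤ j ≤ ℓ-1) and d_j = (1-λ)(ℓ+1+ℓj-j²) + λ(ℓ+2)²/4 (0 ≤ j ≤ ℓ) where λ = 2(√2-1)/ℓ, define K₁ = (∑_{i=0}^{ℓ-2} c_i c_{i+1})(∑_{i=0}^{ℓ} d_i²), K₂ = (∑_{i=0}^{ℓ-1} c_i²)(∑_{i=0}^{ℓ-1} d_i d_{i+1}), and K₃ = (∑_{i=0}^{ℓ-1} c_i d_i)². Then K₃ ≥ K₁ and K₃ ≥ K₂ for every integer ℓ ≥ 3. -/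
open Finset

private lemma sum_cc1 (L : ℝ) (n : ℕ) :
    ∑ i ∈ Finset.range n, (L + (L - 1) * (i:ℝ) - (i:ℝ)^2) * (L + (L - 1) * ((i+1:ℕ):ℝ) - ((i+1:ℕ):ℝ)^2)
      = (-1/5)*(n:ℝ) + (-1/2)*(n:ℝ)^2 + (1/2)*(n:ℝ)^4 + (1/5)*(n:ℝ)^5 + (1/3)*L*(n:ℝ) + (-1/2)*L*(n:ℝ)^2 + (-4/3)*L*(n:ℝ)^3 + (-1/2)*L*(n:ℝ)^4 + (2/3)*L^2*(n:ℝ) + 1*L^2*(n:ℝ)^2 + (1/3)*L^2*(n:ℝ)^3 := by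
  induction n with
  | zero => simp
  | succ m ih => rw [Finset.sum_range_succ, ih]; push_cast; ring

private lemma sum_cc (L : ℝ) (n : ℕ) :
    ∑ i ∈ Finset.range n, (L + (L - 1) * (i:ℝ) - (i:ℝ)^2)^2
      = (2/15)*(n:ℝ) + (-1/3)*(n:ℝ)^3 + (1/5)*(n:ℝ)^5 + (1/3)*L*(n:ℝ) + (1/2)*L*(n:ℝ)^2 + (-1/3)*L*(n:ℝ)^3 + (-1/2)*L*(n:ℝ)^4 + (1/6)*L^2*(n:ℝ) + (1/2)*L^2*(n:ℝ)^2 + (1/3)*L^2*(n:ℝ)^3 := by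
  induction n with
  | zero => simp
  | succ m ih => rw [Finset.sum_range_succ, ih]; push_cast; ring

private lemma sum_dd (L lam : ℝ) (n : ℕ) :
    ∑ i ∈ Finset.range n, ((1 - lam) * (L + 1 + L * (i:ℝ) - (i:ℝ)^2) + lam * (L + 2)^2 / 4)^2
      = (19/30)*(n:ℝ) + 1*(n:ℝ)^2 + (-1/3)*(n:ℝ)^3 + (-1/2)*(n:ℝ)^4 + (1/5)*(n:ℝ)^5 + (2/5)*lam*(n:ℝ) + (-1)*lam*(n:ℝ)^2 + 1*lam*(n:ℝ)^4 + (-2/5)*lam*(n:ℝ)^5 + (-1/30)*lam^2*(n:ℝ) + (1/3)*lam^2*(n:ℝ)^3 + (-1/2)*lam^2*(n:ℝ)^4 + (1/5)*lam^2*(n:ℝ)^5 + (2/3)*L*(n:ℝ) + (3/2)*L*(n:ℝ)^2 + (1/3)*L*(n:ℝ)^3 + (-1/2)*L*(n:ℝ)^4 + (4/3)*L*lam*(n:ℝ) + (-1)*L*lam*(n:ℝ)^2 + (-4/3)*L*lam*(n:ℝ)^3 + 1*L*lam*(n:ℝ)^4 + (-1/2)*L*lam^2*(n:ℝ)^2 +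 1*L*lam^2*(n:ℝ)^3 + (-1/2)*L*lam^2*(n:ℝ)^4 + (1/6)*L^2*(n:ℝ) + (1/2)*L^2*(n:ℝ)^2 + (1/3)*L^2*(n:ℝ)^3 + (13/12)*L^2*lam*(n:ℝ) + (1/4)*L^2*lam*(n:ℝ)^2 + (-5/6)*L^2*lam*(n:ℝ)^3 + (1/4)*L^2*lam^2*(n:ℝ) + (-3/4)*L^2*lam^2*(n:ℝ)^2 + (1/2)*L^2*lam^2*(n:ℝ)^3 + (1/4)*L^3*lam*(n:ℝ) + (1/4)*L^3*lam*(n:ℝ)^2 + (1/4)*L^3*lam^2*(n:ℝ) + (-1/4)*L^3*lam^2*(n:ℝ)^2 + (1/16)*L^4*lam^2*(n:ℝ) := by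
  induction n with
  | zero => simp
  | succ m ih => rw [Finset.sum_range_succ, ih]; push_cast; ring

private lemma sum_dd1 (L lam : ℝ) (n : ℕ) :
    ∑ i ∈ Finset.range n, ((1 - lam) * (L + 1 + L * (i:ℝ) - (i:ℝ)^2) + lam * (L + 2)^2 / 4) *
      ((1 - lam) * (L + 1 + L * ((i+1:ℕ):ℝ) - ((i+1:ℕ):ℝ)^2) + lam * (L + 2)^2 / 4)
      = (4/5)*(n:ℝ) + (-1)*(n:ℝ)^3 + (1/5)*(n:ℝ)^5 + (1/15)*lam*(n:ℝ) + (4/3)*lam*(n:ℝ)^3 + (-2/5)*lam*(n:ℝ)^5 + (2/15)*lam^2*(n:ℝ) + (-1/3)*lam^2*(n:ℝ)^3 + (1/5)*lam^2*(n:ℝ)^5 + (5/3)*L*(n:ℝ) + (3/2)*L*(n:ℝ)^2 + (-2/3)*L*(n:ℝ)^3 + (-1/2)*L*(n:ℝ)^4 + (1/3)*L*lam*(n:ℝ) + (-2)*L*lam*(n:ℝ)^2 + (2/3)*L*lam*(n:ℝ)^3 + 1*L*lam*(n:ℝ)^4 + (1/2)*L*lam^2*(n:ℝ)^2 + (-1/2)*L*lam^2*(n:ℝ)^4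 + (2/3)*L^2*(n:ℝ) + 1*L^2*(n:ℝ)^2 + (1/3)*L^2*(n:ℝ)^3 + (13/12)*L^2*lam*(n:ℝ) + (-1)*L^2*lam*(n:ℝ)^2 + (-5/6)*L^2*lam*(n:ℝ)^3 + (-1/4)*L^2*lam^2*(n:ℝ) + (1/2)*L^2*lam^2*(n:ℝ)^3 + (1/2)*L^3*lam*(n:ℝ) + (1/4)*L^3*lam*(n:ℝ)^2 + (-1/4)*L^3*lam^2*(n:ℝ)^2 + (1/16)*L^4*lam^2*(n:ℝ) := by
  induction n with
  | zero => simp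
  | succ m ih => rw [Finset.sum_range_succ, ih]; push_cast; ring

private lemma sum_cd (L lam : ℝ) (n : ℕ) :
    ∑ i ∈ Finset.range n, (L + (L - 1) * (i:ℝ) - (i:ℝ)^2) *
      ((1 - lam) * (L + 1 + L * (i:ℝ) - (i:ℝ)^2) + lam * (L + 2)^2 / 4)
      = (3/10)*(n:ℝ) + (1/4)*(n:ℝ)^2 + (-1/2)*(n:ℝ)^3 + (-1/4)*(n:ℝ)^4 + (1/5)*(n:ℝ)^5 + (1/30)*lam*(n:ℝ) + (-1/4)*lam*(n:ℝ)^2 + (1/6)*lam*(n:ℝ)^3 + (1/4)*lam*(n:ℝ)^4 + (-1/5)*lam*(n:ℝ)^5 + (1/2)*L*(n:ℝ) + 1*L*(n:ℝ)^2 + (-1/2)*L*(n:ℝ)^4 + (1/3)*L*lam*(n:ℝ) + (-1/2)*L*lam*(n:ℝ)^2 + (-1/3)*L*lam*(n:ℝ)^3 + (1/2)*L*lam*(n:ℝ)^4 + (1/6)*L^2*(n:ℝ) + (1/2)*L^2*(n:ℝ)^2 + (1/3)*L^2*(n:ℝ)^3 + (5/12)*L^2*lam*(n:ℝ) + (-5/12)*L^2*lam*(n:ℝ)^3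 + (1/8)*L^3*lam*(n:ℝ) + (1/8)*L^3*lam*(n:ℝ)^2 := by
  induction n with
  | zero => simp
  | succ m ih => rw [Finset.sum_range_succ, ih]; push_cast; ring

set_option maxHeartbeats 1000000 in
private lemma ineq1 (L lam s : ℝ) (hL : 3 ≤ L) (hlam : lam * L = 2*s - 2)
    (hs2 : s^2 = 2) (hlo : 1.4142 ≤ s) (hhi : s ≤ 1.41422) :
    ((-1/5)*(L-1) + (-1/2)*(L-1)^2 + (1/2)*(L-1)^4 + (1/5)*(L-1)^5 + (1/3)*L*(L-1) + (-1/2)*L*(L-1)^2 + (-4/3)*L*(L-1)^3 + (-1/2)*L*(L-1)^4 + (2/3)*L^2*(L-1) + 1*L^2*(L-1)^2 + (1/3)*L^2*(L-1)^3) * ((19/30)*(L+1) + 1*(L+1)^2 + (-1/3)*(L+1)^3 + (-1/2)*(L+1)^4 + (1/5)*(L+1)^5 + (2/5)*lam*(L+1) + (-1)*lam*(L+1)^2 + 1*lam*(L+1)^4 + (-2/5)*lam*(L+1)^5 + (-1/30)*lam^2*(L+1) + (1/3)*lam^2*(L+1)^3 + (-1/2)*lam^2*(L+1)^4 + (1/5)*lam^2*(L+1)^5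 + (2/3)*L*(L+1) + (3/2)*L*(L+1)^2 + (1/3)*L*(L+1)^3 + (-1/2)*L*(L+1)^4 + (4/3)*L*lam*(L+1) + (-1)*L*lam*(L+1)^2 + (-4/3)*L*lam*(L+1)^3 + 1*L*lam*(L+1)^4 + (-1/2)*L*lam^2*(L+1)^2 + 1*L*lam^2*(L+1)^3 + (-1/2)*L*lam^2*(L+1)^4 + (1/6)*L^2*(L+1) + (1/2)*L^2*(L+1)^2 + (1/3)*L^2*(L+1)^3 + (13/12)*L^2*lam*(L+1) + (1/4)*L^2*lam*(L+1)^2 + (-5/6)*L^2*lam*(L+1)^3 + (1/4)*L^2*lam^2*(L+1) + (-3/4)*L^2*lam^2*(L+1)^2 + (1/2)*L^2*lam^2*(L+1)^3 + (1/4)*L^3*lam*(L+1) + (1/4)*L^3*lam*(L+1)^2 + (1/4)*L^3*lam^2*(L+1) + (-1/4)*L^3*lam^2*(L+1)^2 + (1/16)*L^4*lam^2*(L+1)) ≤ ((3/10)*L + (1/4)*L^2 + (-1/2)*L^3 + (-1/4)*L^4 + (1/5)*L^5 + (1/30)*lam*L + (-1/4)*lam*L^2 + (1/6)*lam*L^3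 + (1/4)*lam*L^4 + (-1/5)*lam*L^5 + (1/2)*L*L + 1*L*L^2 + (-1/2)*L*L^4 + (1/3)*L*lam*L + (-1/2)*L*lam*L^2 + (-1/3)*L*lam*L^3 + (1/2)*L*lam*L^4 + (1/6)*L^2*L + (1/2)*L^2*L^2 + (1/3)*L^2*L^3 + (5/12)*L^2*lam*L + (-5/12)*L^2*lam*L^3 + (1/8)*L^3*lam*L + (1/8)*L^3*lam*L^2)^2 := by
  have hL0 : L ≠ 0 := by intro h; rw [h] at hL; norm_num at hL
  have htE : (0:ℝ) ≤ ((745/3) + (850/9)*s) + ((787/2) + (445/3)*s)*(L-3)^1 + ((63149/240) + (7201/72)*s)*(L-3)^2 + ((8669/90) + (13507/360)*s)*(L-3)^3 + ((2503/120) + (761/90)*s)*(L-3)^4 + ((481/180) + (103/90)*s)*(L-3)^5 + ((3/16) + (31/360)*s)*(L-3)^6 + ((1/180) + (1/360)*s)*(L-3)^7 := by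
    have q0 : (0:ℝ) ≤ ((745/3) + (850/9)*s) := by linarith only [hlo, hhi]
    have q1 : (0:ℝ) ≤ ((787/2) + (445/3)*s)*(L-3)^1 := by
      have hc : (0:ℝ) ≤ ((787/2) + (445/3)*s) := by linarith only [hlo, hhi]
      exact mul_nonneg hc (pow_nonneg (by linarith only [hL] : (0:ℝ) ≤ L - 3) _)
    have q2 : (0:ℝ) ≤ ((63149/240) + (7201/72)*s)*(L-3)^2 := by
      have hc : (0:ℝ) ≤ ((63149/240) + (7201/72)*s) := by linarith only [hlo, hhi]
      exact mul_nonneg hc (pow_nonneg (by linarith only [hL] : (0:ℝ) ≤ L - 3) _)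
    have q3 : (0:ℝ) ≤ ((8669/90) + (13507/360)*s)*(L-3)^3 := by
      have hc : (0:ℝ) ≤ ((8669/90) + (13507/360)*s) := by linarith only [hlo, hhi]
      exact mul_nonneg hc (pow_nonneg (by linarith only [hL] : (0:ℝ) ≤ L - 3) _)
    have q4 : (0:ℝ) ≤ ((2503/120) + (761/90)*s)*(L-3)^4 := by
      have hc : (0:ℝ) ≤ ((2503/120) + (761/90)*s) := by linarith only [hlo, hhi]
      exact mul_nonneg hc (pow_nonneg (by linarith only [hL] : (0:ℝ) ≤ L - 3) _)
    have q5 : (0:ℝ) ≤ ((481/180) + (103/90)*s)*(L-3)^5 := by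
      have hc : (0:ℝ) ≤ ((481/180) + (103/90)*s) := by linarith only [hlo, hhi]
      exact mul_nonneg hc (pow_nonneg (by linarith only [hL] : (0:ℝ) ≤ L - 3) _)
    have q6 : (0:ℝ) ≤ ((3/16) + (31/360)*s)*(L-3)^6 := by
      have hc : (0:ℝ) ≤ ((3/16) + (31/360)*s) := by linarith only [hlo, hhi]
      exact mul_nonneg hc (pow_nonneg (by linarith only [hL] : (0:ℝ) ≤ L - 3) _)
    have q7 : (0:ℝ) ≤ ((1/180) + (1/360)*s)*(L-3)^7 := by
      have hc : (0:ℝ) ≤ ((1/180) + (1/360)*s) := by linarith only [hlo, hhi]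
      exact mul_nonneg hc (pow_nonneg (by linarith only [hL] : (0:ℝ) ≤ L - 3) _)
    linarith only [q0, q1, q2, q3, q4, q5, q6, q7]
  have key : (((3/10)*L + (1/4)*L^2 + (-1/2)*L^3 + (-1/4)*L^4 + (1/5)*L^5 + (1/30)*lam*L + (-1/4)*lam*L^2 + (1/6)*lam*L^3 + (1/4)*lam*L^4 + (-1/5)*lam*L^5 + (1/2)*L*L + 1*L*L^2 + (-1/2)*L*L^4 + (1/3)*L*lam*L + (-1/2)*L*lam*L^2 + (-1/3)*L*lam*L^3 + (1/2)*L*lam*L^4 + (1/6)*L^2*L + (1/2)*L^2*L^2 + (1/3)*L^2*L^3 + (5/12)*L^2*lam*L + (-5/12)*L^2*lam*L^3 + (1/8)*L^3*lam*L + (1/8)*L^3*lam*L^2)^2 - ((-1/5)*(L-1) + (-1/2)*(L-1)^2 + (1/2)*(L-1)^4 + (1/5)*(L-1)^5 + (1/3)*L*(L-1) + (-1/2)*L*(L-1)^2 + (-4/3)*L*(L-1)^3 + (-1/2)*L*(L-1)^4 + (2/3)*L^2*(L-1) + 1*L^2*(L-1)^2 + (1/3)*L^2*(L-1)^3) * ((19/30)*(L+1)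 + 1*(L+1)^2 + (-1/3)*(L+1)^3 + (-1/2)*(L+1)^4 + (1/5)*(L+1)^5 + (2/5)*lam*(L+1) + (-1)*lam*(L+1)^2 + 1*lam*(L+1)^4 + (-2/5)*lam*(L+1)^5 + (-1/30)*lam^2*(L+1) + (1/3)*lam^2*(L+1)^3 + (-1/2)*lam^2*(L+1)^4 + (1/5)*lam^2*(L+1)^5 + (2/3)*L*(L+1) + (3/2)*L*(L+1)^2 + (1/3)*L*(L+1)^3 + (-1/2)*L*(L+1)^4 + (4/3)*L*lam*(L+1) + (-1)*L*lam*(L+1)^2 + (-4/3)*L*lam*(L+1)^3 + 1*L*lam*(L+1)^4 + (-1/2)*L*lam^2*(L+1)^2 + 1*L*lam^2*(L+1)^3 + (-1/2)*L*lam^2*(L+1)^4 + (1/6)*L^2*(L+1) + (1/2)*L^2*(L+1)^2 + (1/3)*L^2*(L+1)^3 + (13/12)*L^2*lam*(L+1) + (1/4)*L^2*lam*(L+1)^2 + (-5/6)*L^2*lam*(L+1)^3 + (1/4)*L^2*lam^2*(L+1) + (-3/4)*L^2*lam^2*(L+1)^2 + (1/2)*L^2*lam^2*(L+1)^3 + (1/4)*L^3*lam*(L+1)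 + (1/4)*L^3*lam*(L+1)^2 + (1/4)*L^3*lam^2*(L+1) + (-1/4)*L^3*lam^2*(L+1)^2 + (1/16)*L^4*lam^2*(L+1))) * L^2
      = (((745/3) + (850/9)*s) + ((787/2) + (445/3)*s)*(L-3)^1 + ((63149/240) + (7201/72)*s)*(L-3)^2 + ((8669/90) + (13507/360)*s)*(L-3)^3 + ((2503/120) + (761/90)*s)*(L-3)^4 + ((481/180) + (103/90)*s)*(L-3)^5 + ((3/16) + (31/360)*s)*(L-3)^6 + ((1/180) + (1/360)*s)*(L-3)^7) * L^2 := by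
    linear_combination ((1/90)*L^2 + (-1/90)*L^2*s + (1/10)*L^3 + (-1/180)*L^3*lam + (19/72)*L^4 + (5/72)*L^4*s + (14/45)*L^5 + (7/72)*L^5*s + (5/144)*L^5*lam + (25/144)*L^6 + (7/240)*L^6*s + (7/144)*L^6*lam + (23/720)*L^7 + (-1/36)*L^7*s + (7/480)*L^7*lam + (-1/96)*L^8 + (-7/288)*L^8*s + (-1/72)*L^8*lam + (-1/180)*L^9 + (-1/144)*L^9*s + (-7/576)*L^9*lam + (-1/1440)*L^10 + (-1/1440)*L^10*s + (-1/288)*L^10*lam + (-1/2880)*L^11*lam) * hlam + ((-1/45)*L^2 + (5/36)*L^4 + (7/36)*L^5 + (7/120)*L^6 + (-1/18)*L^7 + (-7/144)*L^8 + (-1/72)*L^9 + (-1/720)*L^10) * hs2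
  have heq := mul_right_cancel₀ (pow_ne_zero 2 hL0) key
  linarith only [heq, htE]

set_option maxHeartbeats 1000000 in
private lemma ineq2 (L lam s : ℝ) (hL : 3 ≤ L) (hlam : lam * L = 2*s - 2)
    (hs2 : s^2 = 2) (hlo : 1.4142 ≤ s) (hhi : s ≤ 1.41422) :
    ((2/15)*L + (-1/3)*L^3 + (1/5)*L^5 + (1/3)*L*L + (1/2)*L*L^2 + (-1/3)*L*L^3 + (-1/2)*L*L^4 + (1/6)*L^2*L + (1/2)*L^2*L^2 + (1/3)*L^2*L^3) * ((4/5)*L + (-1)*L^3 + (1/5)*L^5 + (1/15)*lam*L + (4/3)*lam*L^3 + (-2/5)*lam*L^5 + (2/15)*lam^2*L + (-1/3)*lam^2*L^3 + (1/5)*lam^2*L^5 + (5/3)*L*L + (3/2)*L*L^2 + (-2/3)*L*L^3 + (-1/2)*L*L^4 + (1/3)*L*lam*L + (-2)*L*lam*L^2 + (2/3)*L*lam*L^3 + 1*L*lam*L^4 + (1/2)*L*lam^2*L^2 + (-1/2)*L*lam^2*L^4 + (2/3)*L^2*L + 1*L^2*L^2 + (1/3)*L^2*L^3 + (13/12)*L^2*lam*L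 + (-1)*L^2*lam*L^2 + (-5/6)*L^2*lam*L^3 + (-1/4)*L^2*lam^2*L + (1/2)*L^2*lam^2*L^3 + (1/2)*L^3*lam*L + (1/4)*L^3*lam*L^2 + (-1/4)*L^3*lam^2*L^2 + (1/16)*L^4*lam^2*L) ≤ ((3/10)*L + (1/4)*L^2 + (-1/2)*L^3 + (-1/4)*L^4 + (1/5)*L^5 + (1/30)*lam*L + (-1/4)*lam*L^2 + (1/6)*lam*L^3 + (1/4)*lam*L^4 + (-1/5)*lam*L^5 + (1/2)*L*L + 1*L*L^2 + (-1/2)*L*L^4 + (1/3)*L*lam*L + (-1/2)*L*lam*L^2 + (-1/3)*L*lam*L^3 + (1/2)*L*lam*L^4 + (1/6)*L^2*L + (1/2)*L^2*L^2 + (1/3)*L^2*L^3 + (5/12)*L^2*lam*L + (-5/12)*L^2*lam*L^3 + (1/8)*L^3*lam*L + (1/8)*L^3*lam*L^2)^2 := by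
  have hL0 : L ≠ 0 := by intro h; rw [h] at hL; norm_num at hL
  have htE : (0:ℝ) ≤ ((1295/6) + (-425/3)*s) + ((28511/72) + (-3095/12)*s)*(L-3)^1 + ((73207/240) + (-4723/24)*s)*(L-3)^2 + ((15443/120) + (-9851/120)*s)*(L-3)^3 + ((3869/120) + (-203/10)*s)*(L-3)^4 + ((577/120) + (-179/60)*s)*(L-3)^5 + ((19/48) + (-29/120)*s)*(L-3)^6 + ((1/72) + (-1/120)*s)*(L-3)^7 := by
    have q0 : (0:ℝ) ≤ ((1295/6) + (-425/3)*s) := by linarith only [hlo, hhi]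
    have q1 : (0:ℝ) ≤ ((28511/72) + (-3095/12)*s)*(L-3)^1 := by
      have hc : (0:ℝ) ≤ ((28511/72) + (-3095/12)*s) := by linarith only [hlo, hhi]
      exact mul_nonneg hc (pow_nonneg (by linarith only [hL] : (0:ℝ) ≤ L - 3) _)
    have q2 : (0:ℝ) ≤ ((73207/240) + (-4723/24)*s)*(L-3)^2 := by
      have hc : (0:ℝ) ≤ ((73207/240) + (-4723/24)*s) := by linarith only [hlo, hhi]
      exact mul_nonneg hc (pow_nonneg (by linarith only [hL] : (0:ℝ) ≤ L - 3) _)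
    have q3 : (0:ℝ) ≤ ((15443/120) + (-9851/120)*s)*(L-3)^3 := by
      have hc : (0:ℝ) ≤ ((15443/120) + (-9851/120)*s) := by linarith only [hlo, hhi]
      exact mul_nonneg hc (pow_nonneg (by linarith only [hL] : (0:ℝ) ≤ L - 3) _)
    have q4 : (0:ℝ) ≤ ((3869/120) + (-203/10)*s)*(L-3)^4 := by
      have hc : (0:ℝ) ≤ ((3869/120) + (-203/10)*s) := by linarith only [hlo, hhi]
      exact mul_nonneg hc (pow_nonneg (by linarith only [hL] : (0:ℝ) ≤ L - 3) _)
    have q5 : (0:ℝ) ≤ ((577/120) + (-179/60)*s)*(L-3)^5 := by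
      have hc : (0:ℝ) ≤ ((577/120) + (-179/60)*s) := by linarith only [hlo, hhi]
      exact mul_nonneg hc (pow_nonneg (by linarith only [hL] : (0:ℝ) ≤ L - 3) _)
    have q6 : (0:ℝ) ≤ ((19/48) + (-29/120)*s)*(L-3)^6 := by
      have hc : (0:ℝ) ≤ ((19/48) + (-29/120)*s) := by linarith only [hlo, hhi]
      exact mul_nonneg hc (pow_nonneg (by linarith only [hL] : (0:ℝ) ≤ L - 3) _)
    have q7 : (0:ℝ) ≤ ((1/72) + (-1/120)*s)*(L-3)^7 := by
      have hc : (0:ℝ) ≤ ((1/72) + (-1/120)*s) := by linarith only [hlo, hhi]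
      exact mul_nonneg hc (pow_nonneg (by linarith only [hL] : (0:ℝ) ≤ L - 3) _)
    linarith only [q0, q1, q2, q3, q4, q5, q6, q7]
  have key : (((3/10)*L + (1/4)*L^2 + (-1/2)*L^3 + (-1/4)*L^4 + (1/5)*L^5 + (1/30)*lam*L + (-1/4)*lam*L^2 + (1/6)*lam*L^3 + (1/4)*lam*L^4 + (-1/5)*lam*L^5 + (1/2)*L*L + 1*L*L^2 + (-1/2)*L*L^4 + (1/3)*L*lam*L + (-1/2)*L*lam*L^2 + (-1/3)*L*lam*L^3 + (1/2)*L*lam*L^4 + (1/6)*L^2*L + (1/2)*L^2*L^2 + (1/3)*L^2*L^3 + (5/12)*L^2*lam*L + (-5/12)*L^2*lam*L^3 + (1/8)*L^3*lam*L + (1/8)*L^3*lam*L^2)^2 - ((2/15)*L + (-1/3)*L^3 + (1/5)*L^5 + (1/3)*L*L + (1/2)*L*L^2 + (-1/3)*L*L^3 + (-1/2)*L*L^4 + (1/6)*L^2*L + (1/2)*L^2*L^2 + (1/3)*L^2*L^3) * ((4/5)*L + (-1)*L^3 + (1/5)*L^5 + (1/15)*lam*L + (4/3)*lam*L^3 +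 (-2/5)*lam*L^5 + (2/15)*lam^2*L + (-1/3)*lam^2*L^3 + (1/5)*lam^2*L^5 + (5/3)*L*L + (3/2)*L*L^2 + (-2/3)*L*L^3 + (-1/2)*L*L^4 + (1/3)*L*lam*L + (-2)*L*lam*L^2 + (2/3)*L*lam*L^3 + 1*L*lam*L^4 + (1/2)*L*lam^2*L^2 + (-1/2)*L*lam^2*L^4 + (2/3)*L^2*L + 1*L^2*L^2 + (1/3)*L^2*L^3 + (13/12)*L^2*lam*L + (-1)*L^2*lam*L^2 + (-5/6)*L^2*lam*L^3 + (-1/4)*L^2*lam^2*L + (1/2)*L^2*lam^2*L^3 + (1/2)*L^3*lam*L + (1/4)*L^3*lam*L^2 + (-1/4)*L^3*lam^2*L^2 + (1/16)*L^4*lam^2*L)) * L^2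
      = (((1295/6) + (-425/3)*s) + ((28511/72) + (-3095/12)*s)*(L-3)^1 + ((73207/240) + (-4723/24)*s)*(L-3)^2 + ((15443/120) + (-9851/120)*s)*(L-3)^3 + ((3869/120) + (-203/10)*s)*(L-3)^4 + ((577/120) + (-179/60)*s)*(L-3)^5 + ((19/48) + (-29/120)*s)*(L-3)^6 + ((1/72) + (-1/120)*s)*(L-3)^7) * L^2 := by
    linear_combination ((1/30)*L^2 + (-1/30)*L^2*s + (4/45)*L^3 + (-7/90)*L^3*s + (-1/60)*L^3*lam + (3/40)*L^4 + (-1/24)*L^4*s + (-7/180)*L^4*lam + (-1/72)*L^5 + (2/45)*L^5*s + (-1/48)*L^5*lam + (-7/90)*L^6 + (13/180)*L^6*s + (1/45)*L^6*lam + (-49/720)*L^7 + (13/360)*L^7*s + (13/360)*L^7*lam + (-43/1440)*L^8 + (1/288)*L^8*s + (13/720)*L^8*lam + (-1/144)*L^9 + (-1/360)*L^9*s + (1/576)*L^9*lam + (-1/1440)*L^10 + (-1/1440)*L^10*s + (-1/720)*L^10*lam + (-1/2880)*L^11*lam) * hlam + ((-1/15)*L^2 + (-7/45)*L^3 + (-1/12)*L^4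 + (4/45)*L^5 + (13/90)*L^6 + (13/180)*L^7 + (1/144)*L^8 + (-1/180)*L^9 + (-1/720)*L^10) * hs2
  have heq := mul_right_cancel₀ (pow_ne_zero 2 hL0) key
  linarith only [heq, htE]

theorem K3_dominates_K1_K2 (ℓ : ℕ) (hℓ : 3 ≤ ℓ) :
    let lam : ℝ := 2 * (Real.sqrt 2 - 1) / (ℓ : ℝ)
    let c : ℕ → ℝ := fun j => (ℓ : ℝ) + ((ℓ : ℝ) - 1) * (j : ℝ) - (j : ℝ) ^ 2
    let d : ℕ → ℝ := fun j =>
      (1 - lam) * ((ℓ : ℝ) + 1 + (ℓ : ℝ) * (j : ℝ) - (j : ℝ) ^ 2) + lam * ((ℓ : ℝ) + 2) ^ 2 / 4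
    let K₁ : ℝ := (∑ i ∈ Finset.range (ℓ - 1), c i * c (i + 1)) *
      (∑ i ∈ Finset.range (ℓ + 1), (d i) ^ 2)
    let K₂ : ℝ := (∑ i ∈ Finset.range ℓ, (c i) ^ 2) *
      (∑ i ∈ Finset.range ℓ, d i * d (i + 1))
    let K₃ : ℝ := (∑ i ∈ Finset.range ℓ, c i * d i) ^ 2
    K₁ ≤ K₃ ∧ K₂ ≤ K₃ := by
  intro lam c d K₁ K₂ K₃
  have hs2 : (Real.sqrt 2)^2 = 2 := Real.sq_sqrt (by norm_num)
  have hlo : (1.4142:ℝ) ≤ Real.sqrt 2 := by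
    nlinarith [Real.sqrt_nonneg 2, hs2]
  have hhi : Real.sqrt 2 ≤ (1.41422:ℝ) := by
    nlinarith [Real.sqrt_nonneg 2, hs2]
  have hL : (3:ℝ) ≤ (ℓ:ℝ) := by exact_mod_cast hℓ
  have hL0 : (ℓ:ℝ) ≠ 0 := by intro h; rw [h] at hL; norm_num at hL
  have hlam : lam * (ℓ:ℝ) = 2 * Real.sqrt 2 - 2 := by
    simp only [lam]
    rw [div_mul_cancel₀ _ hL0]
    ring
  have hcast1 : ((ℓ - 1 : ℕ) : ℝ) = (ℓ:ℝ) - 1 := by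
    have : 1 ≤ ℓ := by omega
    push_cast [this]; ring
  have h1 : (∑ i ∈ Finset.range (ℓ - 1), c i * c (i + 1)) = (-1/5)*((ℓ-1:ℕ):ℝ) + (-1/2)*((ℓ-1:ℕ):ℝ)^2 + (1/2)*((ℓ-1:ℕ):ℝ)^4 + (1/5)*((ℓ-1:ℕ):ℝ)^5 + (1/3)*(ℓ:ℝ)*((ℓ-1:ℕ):ℝ) + (-1/2)*(ℓ:ℝ)*((ℓ-1:ℕ):ℝ)^2 + (-4/3)*(ℓ:ℝ)*((ℓ-1:ℕ):ℝ)^3 + (-1/2)*(ℓ:ℝ)*((ℓ-1:ℕ):ℝ)^4 + (2/3)*(ℓ:ℝ)^2*((ℓ-1:ℕ):ℝ) + 1*(ℓ:ℝ)^2*((ℓ-1:ℕ):ℝ)^2 + (1/3)*(ℓ:ℝ)^2*((ℓ-1:ℕ):ℝ)^3 := by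
    simp only [c]; exact sum_cc1 (ℓ:ℝ) (ℓ-1)
  have h2 : (∑ i ∈ Finset.range (ℓ + 1), (d i)^2) = (19/30)*((ℓ+1:ℕ):ℝ) + 1*((ℓ+1:ℕ):ℝ)^2 + (-1/3)*((ℓ+1:ℕ):ℝ)^3 + (-1/2)*((ℓ+1:ℕ):ℝ)^4 + (1/5)*((ℓ+1:ℕ):ℝ)^5 + (2/5)*lam*((ℓ+1:ℕ):ℝ) + (-1)*lam*((ℓ+1:ℕ):ℝ)^2 + 1*lam*((ℓ+1:ℕ):ℝ)^4 + (-2/5)*lam*((ℓ+1:ℕ):ℝ)^5 + (-1/30)*lam^2*((ℓ+1:ℕ):ℝ) + (1/3)*lam^2*((ℓ+1:ℕ):ℝ)^3 + (-1/2)*lam^2*((ℓ+1:ℕ):ℝ)^4 + (1/5)*lam^2*((ℓ+1:ℕ):ℝ)^5 + (2/3)*(ℓ:ℝ)*((ℓ+1:ℕ):ℝ) + (3/2)*(ℓ:ℝ)*((ℓ+1:ℕ):ℝ)^2 + (1/3)*(ℓ:ℝ)*((ℓ+1:ℕ):ℝ)^3 + (-1/2)*(ℓ:ℝ)*((ℓ+1:ℕ):ℝ)^4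 + (4/3)*(ℓ:ℝ)*lam*((ℓ+1:ℕ):ℝ) + (-1)*(ℓ:ℝ)*lam*((ℓ+1:ℕ):ℝ)^2 + (-4/3)*(ℓ:ℝ)*lam*((ℓ+1:ℕ):ℝ)^3 + 1*(ℓ:ℝ)*lam*((ℓ+1:ℕ):ℝ)^4 + (-1/2)*(ℓ:ℝ)*lam^2*((ℓ+1:ℕ):ℝ)^2 + 1*(ℓ:ℝ)*lam^2*((ℓ+1:ℕ):ℝ)^3 + (-1/2)*(ℓ:ℝ)*lam^2*((ℓ+1:ℕ):ℝ)^4 + (1/6)*(ℓ:ℝ)^2*((ℓ+1:ℕ):ℝ) + (1/2)*(ℓ:ℝ)^2*((ℓ+1:ℕ):ℝ)^2 + (1/3)*(ℓ:ℝ)^2*((ℓ+1:ℕ):ℝ)^3 + (13/12)*(ℓ:ℝ)^2*lam*((ℓ+1:ℕ):ℝ) + (1/4)*(ℓ:ℝ)^2*lam*((ℓ+1:ℕ):ℝ)^2 + (-5/6)*(ℓ:ℝ)^2*lam*((ℓ+1:ℕ):ℝ)^3 + (1/4)*(ℓ:ℝ)^2*lam^2*((ℓ+1:ℕ):ℝ)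 + (-3/4)*(ℓ:ℝ)^2*lam^2*((ℓ+1:ℕ):ℝ)^2 + (1/2)*(ℓ:ℝ)^2*lam^2*((ℓ+1:ℕ):ℝ)^3 + (1/4)*(ℓ:ℝ)^3*lam*((ℓ+1:ℕ):ℝ) + (1/4)*(ℓ:ℝ)^3*lam*((ℓ+1:ℕ):ℝ)^2 + (1/4)*(ℓ:ℝ)^3*lam^2*((ℓ+1:ℕ):ℝ) + (-1/4)*(ℓ:ℝ)^3*lam^2*((ℓ+1:ℕ):ℝ)^2 + (1/16)*(ℓ:ℝ)^4*lam^2*((ℓ+1:ℕ):ℝ) := by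
    simp only [d]; exact sum_dd (ℓ:ℝ) lam (ℓ+1)
  have h3 : (∑ i ∈ Finset.range ℓ, (c i)^2) = (2/15)*(ℓ:ℝ) + (-1/3)*(ℓ:ℝ)^3 + (1/5)*(ℓ:ℝ)^5 + (1/3)*(ℓ:ℝ)*(ℓ:ℝ) + (1/2)*(ℓ:ℝ)*(ℓ:ℝ)^2 + (-1/3)*(ℓ:ℝ)*(ℓ:ℝ)^3 + (-1/2)*(ℓ:ℝ)*(ℓ:ℝ)^4 + (1/6)*(ℓ:ℝ)^2*(ℓ:ℝ) + (1/2)*(ℓ:ℝ)^2*(ℓ:ℝ)^2 + (1/3)*(ℓ:ℝ)^2*(ℓ:ℝ)^3 := by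
    simp only [c]; exact sum_cc (ℓ:ℝ) ℓ
  have h4 : (∑ i ∈ Finset.range ℓ, d i * d (i + 1)) = (4/5)*(ℓ:ℝ) + (-1)*(ℓ:ℝ)^3 + (1/5)*(ℓ:ℝ)^5 + (1/15)*lam*(ℓ:ℝ) + (4/3)*lam*(ℓ:ℝ)^3 + (-2/5)*lam*(ℓ:ℝ)^5 + (2/15)*lam^2*(ℓ:ℝ) + (-1/3)*lam^2*(ℓ:ℝ)^3 + (1/5)*lam^2*(ℓ:ℝ)^5 + (5/3)*(ℓ:ℝ)*(ℓ:ℝ) + (3/2)*(ℓ:ℝ)*(ℓ:ℝ)^2 + (-2/3)*(ℓ:ℝ)*(ℓ:ℝ)^3 + (-1/2)*(ℓ:ℝ)*(ℓ:ℝ)^4 + (1/3)*(ℓ:ℝ)*lam*(ℓ:ℝ) + (-2)*(ℓ:ℝ)*lam*(ℓ:ℝ)^2 + (2/3)*(ℓ:ℝ)*lam*(ℓ:ℝ)^3 + 1*(ℓ:ℝ)*lam*(ℓ:ℝ)^4 + (1/2)*(ℓ:ℝ)*lam^2*(ℓ:ℝ)^2 + (-1/2)*(ℓ:ℝ)*lam^2*(ℓ:ℝ)^4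 + (2/3)*(ℓ:ℝ)^2*(ℓ:ℝ) + 1*(ℓ:ℝ)^2*(ℓ:ℝ)^2 + (1/3)*(ℓ:ℝ)^2*(ℓ:ℝ)^3 + (13/12)*(ℓ:ℝ)^2*lam*(ℓ:ℝ) + (-1)*(ℓ:ℝ)^2*lam*(ℓ:ℝ)^2 + (-5/6)*(ℓ:ℝ)^2*lam*(ℓ:ℝ)^3 + (-1/4)*(ℓ:ℝ)^2*lam^2*(ℓ:ℝ) + (1/2)*(ℓ:ℝ)^2*lam^2*(ℓ:ℝ)^3 + (1/2)*(ℓ:ℝ)^3*lam*(ℓ:ℝ) + (1/4)*(ℓ:ℝ)^3*lam*(ℓ:ℝ)^2 + (-1/4)*(ℓ:ℝ)^3*lam^2*(ℓ:ℝ)^2 + (1/16)*(ℓ:ℝ)^4*lam^2*(ℓ:ℝ) := by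
    simp only [d]; exact sum_dd1 (ℓ:ℝ) lam ℓ
  have h5 : (∑ i ∈ Finset.range ℓ, c i * d i) = (3/10)*(ℓ:ℝ) + (1/4)*(ℓ:ℝ)^2 + (-1/2)*(ℓ:ℝ)^3 + (-1/4)*(ℓ:ℝ)^4 + (1/5)*(ℓ:ℝ)^5 + (1/30)*lam*(ℓ:ℝ) + (-1/4)*lam*(ℓ:ℝ)^2 + (1/6)*lam*(ℓ:ℝ)^3 + (1/4)*lam*(ℓ:ℝ)^4 + (-1/5)*lam*(ℓ:ℝ)^5 + (1/2)*(ℓ:ℝ)*(ℓ:ℝ) + 1*(ℓ:ℝ)*(ℓ:ℝ)^2 + (-1/2)*(ℓ:ℝ)*(ℓ:ℝ)^4 + (1/3)*(ℓ:ℝ)*lam*(ℓ:ℝ) + (-1/2)*(ℓ:ℝ)*lam*(ℓ:ℝ)^2 + (-1/3)*(ℓ:ℝ)*lam*(ℓ:ℝ)^3 + (1/2)*(ℓ:ℝ)*lam*(ℓ:ℝ)^4 + (1/6)*(ℓ:ℝ)^2*(ℓ:ℝ) + (1/2)*(ℓ:ℝ)^2*(ℓ:ℝ)^2 + (1/3)*(ℓ:ℝ)^2*(ℓ:ℝ)^3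 + (5/12)*(ℓ:ℝ)^2*lam*(ℓ:ℝ) + (-5/12)*(ℓ:ℝ)^2*lam*(ℓ:ℝ)^3 + (1/8)*(ℓ:ℝ)^3*lam*(ℓ:ℝ) + (1/8)*(ℓ:ℝ)^3*lam*(ℓ:ℝ)^2 := by
    simp only [c, d]; exact sum_cd (ℓ:ℝ) lam ℓ
  have hcast2 : ((ℓ + 1 : ℕ) : ℝ) = (ℓ:ℝ) + 1 := by push_cast; ring
  rw [hcast1] at h1
  rw [hcast2] at h2
  constructor
  · show K₁ ≤ K₃
    simp only [K₁, K₃]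
    rw [h1, h2, h5]
    exact ineq1 (ℓ:ℝ) lam (Real.sqrt 2) hL hlam hs2 hlo hhi
  · show K₂ ≤ K₃
    simp only [K₂, K₃]
    rw [h3, h4, h5]
    exact ineq2 (ℓ:ℝ) lam (Real.sqrt 2) hL hlam hs2 hlo hhi
end

section
/- With c_j = ℓ + (ℓ-1)j - j² and d_j = (1-λ)(ℓ+1+ℓj-j²) + λ(ℓ+2)²/4 where λ = 2(√2-1)/ℓ, and with K₀ = (∑ c_i²)(∑ d_i²), K₁ = (∑_{i=0}^{ℓ-2} c_i c_{i+1})(∑ d_i²), K₃ = (∑ c_i d_i)², and K₄ = (∑ c_i)²(∑ d_i)²/(ℓ² + ℓ) (sums of c over 0..ℓ-1 and of d over 0..ℓ), the limit lim_{ℓ→∞} ℓ² · (K₀ + K₃ - 2K₁)/K₄ equals 36/5. -/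
open Finset Filter

noncomputable def NYaux (s y : ℝ) : ℝ :=
    (1/120:ℝ) + (-1/720:ℝ)*s^2 + (13/120:ℝ)*y +
    (1/120:ℝ)*y*s + (-11/720:ℝ)*y*s^2 + (29/48:ℝ)*y^2 +
    (11/120:ℝ)*y^2*s + (-13/240:ℝ)*y^2*s^2 + (451/240:ℝ)*y^3 +
    (53/120:ℝ)*y^3*s + (-7/240:ℝ)*y^3*s^2 + (283/80:ℝ)*y^4 +
    (49/40:ℝ)*y^4*s + (4/15:ℝ)*y^4*s^2 + (65/16:ℝ)*y^5 +
    (43/20:ℝ)*y^5*s + (7/10:ℝ)*y^5*s^2 + (8/3:ℝ)*y^6 +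
    (49/20:ℝ)*y^6*s + (121/180:ℝ)*y^6*s^2 + (23/30:ℝ)*y^7 +
    (53/30:ℝ)*y^7*s + (29/180:ℝ)*y^7*s^2 + (-1/15:ℝ)*y^8 +
    (11/15:ℝ)*y^8*s + (-2/15:ℝ)*y^8*s^2 + (-1/15:ℝ)*y^9 +
    (2/15:ℝ)*y^9*s + (-1/15:ℝ)*y^9*s^2

noncomputable def DYaux (s y : ℝ) : ℝ :=
    (1/1296:ℝ) + (1/81:ℝ)*y + (1/648:ℝ)*y*s +
    (19/216:ℝ)*y^2 + (7/324:ℝ)*y^2*s + (1/1296:ℝ)*y^2*s^2 +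
    (119/324:ℝ)*y^3 + (43/324:ℝ)*y^3*s + (1/108:ℝ)*y^3*s^2 +
    (1289/1296:ℝ)*y^4 + (38/81:ℝ)*y^4*s + (31/648:ℝ)*y^4*s^2 +
    (197/108:ℝ)*y^5 + (227/216:ℝ)*y^5*s + (5/36:ℝ)*y^5*s^2 +
    (743/324:ℝ)*y^6 + (167/108:ℝ)*y^6*s + (107/432:ℝ)*y^6*s^2 +
    (158/81:ℝ)*y^7 + (121/81:ℝ)*y^7*s + (5/18:ℝ)*y^7*s^2 +
    (29/27:ℝ)*y^8 + (74/81:ℝ)*y^8*s + (31/162:ℝ)*y^8*s^2 +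
    (28/81:ℝ)*y^9 + (26/81:ℝ)*y^9*s + (2/27:ℝ)*y^9*s^2 +
    (4/81:ℝ)*y^10 + (4/81:ℝ)*y^10*s + (1/81:ℝ)*y^10*s^2

lemma sumLc2 (x : ℝ) (n : ℕ) :
    ∑ i ∈ Finset.range n, (x + (x - 1) * (i:ℝ) - (i:ℝ) ^ 2) ^ 2 =
      (2/15:ℝ)*(n:ℝ) + (-1/3:ℝ)*(n:ℝ)^3 + (1/5:ℝ)*(n:ℝ)^5 + (1/3:ℝ)*x*(n:ℝ) +
      (1/2:ℝ)*x*(n:ℝ)^2 + (-1/3:ℝ)*x*(n:ℝ)^3 + (-1/2:ℝ)*x*(n:ℝ)^4 + (1/6:ℝ)*x^2*(n:ℝ) +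
      (1/2:ℝ)*x^2*(n:ℝ)^2 + (1/3:ℝ)*x^2*(n:ℝ)^3 := by
  induction n with
  | zero => simp
  | succ k ih => rw [Finset.sum_range_succ, ih]; push_cast; ring

lemma sumLd2 (x m : ℝ) (n : ℕ) :
    ∑ i ∈ Finset.range n,
      ((1 - m) * (x + 1 + x * (i:ℝ) - (i:ℝ) ^ 2) + m * (x + 2) ^ 2 / 4) ^ 2 =
      (19/30:ℝ)*(n:ℝ) + (1:ℝ)*(n:ℝ)^2 + (-1/3:ℝ)*(n:ℝ)^3 + (-1/2:ℝ)*(n:ℝ)^4 +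
      (1/5:ℝ)*(n:ℝ)^5 + (2/5:ℝ)*m*(n:ℝ) + (-1:ℝ)*m*(n:ℝ)^2 + (1:ℝ)*m*(n:ℝ)^4 +
      (-2/5:ℝ)*m*(n:ℝ)^5 + (-1/30:ℝ)*m^2*(n:ℝ) + (1/3:ℝ)*m^2*(n:ℝ)^3 + (-1/2:ℝ)*m^2*(n:ℝ)^4 +
      (1/5:ℝ)*m^2*(n:ℝ)^5 + (2/3:ℝ)*x*(n:ℝ) + (3/2:ℝ)*x*(n:ℝ)^2 + (1/3:ℝ)*x*(n:ℝ)^3 +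
      (-1/2:ℝ)*x*(n:ℝ)^4 + (4/3:ℝ)*x*m*(n:ℝ) + (-1:ℝ)*x*m*(n:ℝ)^2 + (-4/3:ℝ)*x*m*(n:ℝ)^3 +
      (1:ℝ)*x*m*(n:ℝ)^4 + (-1/2:ℝ)*x*m^2*(n:ℝ)^2 + (1:ℝ)*x*m^2*(n:ℝ)^3 + (-1/2:ℝ)*x*m^2*(n:ℝ)^4 +
      (1/6:ℝ)*x^2*(n:ℝ) + (1/2:ℝ)*x^2*(n:ℝ)^2 + (1/3:ℝ)*x^2*(n:ℝ)^3 + (13/12:ℝ)*x^2*m*(n:ℝ) +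
      (1/4:ℝ)*x^2*m*(n:ℝ)^2 + (-5/6:ℝ)*x^2*m*(n:ℝ)^3 + (1/4:ℝ)*x^2*m^2*(n:ℝ) + (-3/4:ℝ)*x^2*m^2*(n:ℝ)^2 +
      (1/2:ℝ)*x^2*m^2*(n:ℝ)^3 + (1/4:ℝ)*x^3*m*(n:ℝ) + (1/4:ℝ)*x^3*m*(n:ℝ)^2 + (1/4:ℝ)*x^3*m^2*(n:ℝ) +
      (-1/4:ℝ)*x^3*m^2*(n:ℝ)^2 + (1/16:ℝ)*x^4*m^2*(n:ℝ) := by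
  induction n with
  | zero => simp
  | succ k ih => rw [Finset.sum_range_succ, ih]; push_cast; ring

lemma sumLcc (x : ℝ) (n : ℕ) :
    ∑ i ∈ Finset.range n, (x + (x - 1) * (i:ℝ) - (i:ℝ) ^ 2) *
        (x + (x - 1) * ((i + 1 : ℕ):ℝ) - ((i + 1 : ℕ):ℝ) ^ 2) =
      (-1/5:ℝ)*(n:ℝ) + (-1/2:ℝ)*(n:ℝ)^2 + (1/2:ℝ)*(n:ℝ)^4 + (1/5:ℝ)*(n:ℝ)^5 +
      (1/3:ℝ)*x*(n:ℝ) + (-1/2:ℝ)*x*(n:ℝ)^2 + (-4/3:ℝ)*x*(n:ℝ)^3 + (-1/2:ℝ)*x*(n:ℝ)^4 +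
      (2/3:ℝ)*x^2*(n:ℝ) + (1:ℝ)*x^2*(n:ℝ)^2 + (1/3:ℝ)*x^2*(n:ℝ)^3 := by
  induction n with
  | zero => simp
  | succ k ih => rw [Finset.sum_range_succ, ih]; push_cast; ring

lemma sumLcd (x m : ℝ) (n : ℕ) :
    ∑ i ∈ Finset.range n, (x + (x - 1) * (i:ℝ) - (i:ℝ) ^ 2) *
        ((1 - m) * (x + 1 + x * (i:ℝ) - (i:ℝ) ^ 2) + m * (x + 2) ^ 2 / 4) =
      (3/10:ℝ)*(n:ℝ) + (1/4:ℝ)*(n:ℝ)^2 + (-1/2:ℝ)*(n:ℝ)^3 + (-1/4:ℝ)*(n:ℝ)^4 +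
      (1/5:ℝ)*(n:ℝ)^5 + (1/30:ℝ)*m*(n:ℝ) + (-1/4:ℝ)*m*(n:ℝ)^2 + (1/6:ℝ)*m*(n:ℝ)^3 +
      (1/4:ℝ)*m*(n:ℝ)^4 + (-1/5:ℝ)*m*(n:ℝ)^5 + (1/2:ℝ)*x*(n:ℝ) + (1:ℝ)*x*(n:ℝ)^2 +
      (-1/2:ℝ)*x*(n:ℝ)^4 + (1/3:ℝ)*x*m*(n:ℝ) + (-1/2:ℝ)*x*m*(n:ℝ)^2 + (-1/3:ℝ)*x*m*(n:ℝ)^3 +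
      (1/2:ℝ)*x*m*(n:ℝ)^4 + (1/6:ℝ)*x^2*(n:ℝ) + (1/2:ℝ)*x^2*(n:ℝ)^2 + (1/3:ℝ)*x^2*(n:ℝ)^3 +
      (5/12:ℝ)*x^2*m*(n:ℝ) + (-5/12:ℝ)*x^2*m*(n:ℝ)^3 + (1/8:ℝ)*x^3*m*(n:ℝ) + (1/8:ℝ)*x^3*m*(n:ℝ)^2 := by
  induction n with
  | zero => simp
  | succ k ih => rw [Finset.sum_range_succ, ih]; push_cast; ring

lemma sumLc (x : ℝ) (n : ℕ) :
    ∑ i ∈ Finset.range n, (x + (x - 1) * (i:ℝ) - (i:ℝ) ^ 2) =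
      (1/3:ℝ)*(n:ℝ) + (-1/3:ℝ)*(n:ℝ)^3 + (1/2:ℝ)*x*(n:ℝ) + (1/2:ℝ)*x*(n:ℝ)^2 := by
  induction n with
  | zero => simp
  | succ k ih => rw [Finset.sum_range_succ, ih]; push_cast; ring

lemma sumLd (x m : ℝ) (n : ℕ) :
    ∑ i ∈ Finset.range n,
      ((1 - m) * (x + 1 + x * (i:ℝ) - (i:ℝ) ^ 2) + m * (x + 2) ^ 2 / 4) =
      (5/6:ℝ)*(n:ℝ) + (1/2:ℝ)*(n:ℝ)^2 + (-1/3:ℝ)*(n:ℝ)^3 + (1/6:ℝ)*m*(n:ℝ) +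
      (-1/2:ℝ)*m*(n:ℝ)^2 + (1/3:ℝ)*m*(n:ℝ)^3 + (1/2:ℝ)*x*(n:ℝ) + (1/2:ℝ)*x*(n:ℝ)^2 +
      (1/2:ℝ)*x*m*(n:ℝ) + (-1/2:ℝ)*x*m*(n:ℝ)^2 + (1/4:ℝ)*x^2*m*(n:ℝ) := by
  induction n with
  | zero => simp
  | succ k ih => rw [Finset.sum_range_succ, ih]; push_cast; ring

set_option maxHeartbeats 16000000 in
theorem threshold_asymptotics_2d :
    Filter.Tendsto
      (fun ℓ : ℕ =>
        let lam : ℝ := 2 * (Real.sqrt 2 - 1) / (ℓ : ℝ)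
        let c : ℕ → ℝ := fun j => (ℓ : ℝ) + ((ℓ : ℝ) - 1) * (j : ℝ) - (j : ℝ) ^ 2
        let d : ℕ → ℝ := fun j =>
          (1 - lam) * ((ℓ : ℝ) + 1 + (ℓ : ℝ) * (j : ℝ) - (j : ℝ) ^ 2)
            + lam * ((ℓ : ℝ) + 2) ^ 2 / 4
        let K₀ : ℝ := (∑ i ∈ Finset.range ℓ, (c i) ^ 2) *
          (∑ i ∈ Finset.range (ℓ + 1), (d i) ^ 2)
        let K₁ : ℝ := (∑ i ∈ Finset.range (ℓ - 1), c i * c (i + 1)) *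
          (∑ i ∈ Finset.range (ℓ + 1), (d i) ^ 2)
        let K₃ : ℝ := (∑ i ∈ Finset.range ℓ, c i * d i) ^ 2
        let K₄ : ℝ := (∑ i ∈ Finset.range ℓ, c i) ^ 2 *
          (∑ i ∈ Finset.range (ℓ + 1), d i) ^ 2 / ((ℓ : ℝ) ^ 2 + (ℓ : ℝ))
        (ℓ : ℝ) ^ 2 * ((K₀ + K₃ - 2 * K₁) / K₄))
      Filter.atTop (nhds (36 / 5)) := by
  have hs0 : (0:ℝ) ≤ Real.sqrt 2 := Real.sqrt_nonneg 2
  have hs2 : Real.sqrt 2 ^ 2 = 2 := Real.sq_sqrt (by norm_num)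
  have hs1 : 1 < Real.sqrt 2 := by nlinarith
  have hslt : Real.sqrt 2 < 3/2 := by nlinarith
  have h10 : Filter.Tendsto (fun ℓ : ℕ => 1/(ℓ:ℝ)) Filter.atTop (nhds 0) :=
    tendsto_one_div_atTop_nhds_zero_nat
  have hNc : Continuous (NYaux (Real.sqrt 2)) := by unfold NYaux; fun_prop
  have hDc : Continuous (DYaux (Real.sqrt 2)) := by unfold DYaux; fun_prop
  have hN : Filter.Tendsto (fun ℓ : ℕ => NYaux (Real.sqrt 2) (1/(ℓ:ℝ))) Filter.atTop
      (nhds (NYaux (Real.sqrt 2) 0)) := (hNc.tendsto 0).comp h10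
  have hD : Filter.Tendsto (fun ℓ : ℕ => DYaux (Real.sqrt 2) (1/(ℓ:ℝ))) Filter.atTop
      (nhds (DYaux (Real.sqrt 2) 0)) := (hDc.tendsto 0).comp h10
  have hD0 : DYaux (Real.sqrt 2) 0 ≠ 0 := by unfold DYaux; norm_num
  have hval : NYaux (Real.sqrt 2) 0 / DYaux (Real.sqrt 2) 0 = 36/5 := by
    unfold NYaux DYaux
    rw [hs2]
    norm_num
  have hlim : Filter.Tendsto
      (fun ℓ : ℕ => NYaux (Real.sqrt 2) (1/(ℓ:ℝ)) / DYaux (Real.sqrt 2) (1/(ℓ:ℝ)))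
      Filter.atTop (nhds (36/5)) := by
    rw [← hval]; exact hN.div hD hD0
  apply hlim.congr'
  filter_upwards [Filter.eventually_ge_atTop 1] with ℓ hℓ
  dsimp only
  have hx1 : (1:ℝ) ≤ (ℓ:ℝ) := by exact_mod_cast hℓ
  have hx0 : (0:ℝ) < (ℓ:ℝ) := by linarith
  have hm1 : 2*(Real.sqrt 2 - 1)/(ℓ:ℝ) < 1 := by
    rw [div_lt_one hx0]; nlinarith
  have hm0 : 0 < 2*(Real.sqrt 2 - 1)/(ℓ:ℝ) := div_pos (by linarith) hx0
  have hc : 0 < ∑ i ∈ Finset.range ℓ,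
      ((ℓ:ℝ) + ((ℓ:ℝ) - 1) * (i:ℝ) - (i:ℝ) ^ 2) := by
    apply Finset.sum_pos
    · intro i hi
      have h1 : (i:ℝ) + 1 ≤ (ℓ:ℝ) := by exact_mod_cast Finset.mem_range.mp hi
      have h2 : (0:ℝ) ≤ (i:ℝ) := Nat.cast_nonneg i
      nlinarith
    · exact Finset.nonempty_range_iff.mpr (by omega)
  have hd : 0 < ∑ i ∈ Finset.range (ℓ+1),
      ((1 - 2 * (Real.sqrt 2 - 1) / (ℓ:ℝ)) * ((ℓ:ℝ) + 1 + (ℓ:ℝ) * (i:ℝ) - (i:ℝ) ^ 2)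
        + 2 * (Real.sqrt 2 - 1) / (ℓ:ℝ) * ((ℓ:ℝ) + 2) ^ 2 / 4) := by
    apply Finset.sum_pos
    · intro i hi
      have h1 : (i:ℝ) ≤ (ℓ:ℝ) := by
        have := Finset.mem_range.mp hi
        have : i ≤ ℓ := by omega
        exact_mod_cast this
      have h2 : (0:ℝ) ≤ (i:ℝ) := Nat.cast_nonneg i
      have hinner : 0 < (ℓ:ℝ) + 1 + (ℓ:ℝ) * (i:ℝ) - (i:ℝ) ^ 2 := by nlinarith
      have t1 : 0 < (1 - 2 * (Real.sqrt 2 - 1) / (ℓ:ℝ)) *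
          ((ℓ:ℝ) + 1 + (ℓ:ℝ) * (i:ℝ) - (i:ℝ) ^ 2) := mul_pos (by linarith) hinner
      have t2 : 0 ≤ 2 * (Real.sqrt 2 - 1) / (ℓ:ℝ) * ((ℓ:ℝ) + 2) ^ 2 / 4 := by
        apply div_nonneg (mul_nonneg hm0.le (sq_nonneg _)) (by norm_num)
      linarith
    · exact Finset.nonempty_range_iff.mpr (by omega)
  have hDne : DYaux (Real.sqrt 2) (1/(ℓ:ℝ)) ≠ 0 := by
    have : 0 < DYaux (Real.sqrt 2) (1/(ℓ:ℝ)) := by unfold DYaux; positivity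
    exact this.ne'
  set C1 := ∑ i ∈ Finset.range ℓ, ((ℓ:ℝ) + ((ℓ:ℝ) - 1) * (i:ℝ) - (i:ℝ) ^ 2) ^ 2 with hC1
  set C2 := ∑ i ∈ Finset.range (ℓ+1),
      ((1 - 2 * (Real.sqrt 2 - 1) / (ℓ:ℝ)) * ((ℓ:ℝ) + 1 + (ℓ:ℝ) * (i:ℝ) - (i:ℝ) ^ 2)
        + 2 * (Real.sqrt 2 - 1) / (ℓ:ℝ) * ((ℓ:ℝ) + 2) ^ 2 / 4) ^ 2 with hC2
  set C3 := ∑ i ∈ Finset.range (ℓ-1),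
      ((ℓ:ℝ) + ((ℓ:ℝ) - 1) * (i:ℝ) - (i:ℝ) ^ 2) *
        ((ℓ:ℝ) + ((ℓ:ℝ) - 1) * ((i+1:ℕ):ℝ) - ((i+1:ℕ):ℝ) ^ 2) with hC3
  set C4 := ∑ i ∈ Finset.range ℓ,
      ((ℓ:ℝ) + ((ℓ:ℝ) - 1) * (i:ℝ) - (i:ℝ) ^ 2) *
        ((1 - 2 * (Real.sqrt 2 - 1) / (ℓ:ℝ)) * ((ℓ:ℝ) + 1 + (ℓ:ℝ) * (i:ℝ) - (i:ℝ) ^ 2)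
          + 2 * (Real.sqrt 2 - 1) / (ℓ:ℝ) * ((ℓ:ℝ) + 2) ^ 2 / 4) with hC4
  set C5 := ∑ i ∈ Finset.range ℓ, ((ℓ:ℝ) + ((ℓ:ℝ) - 1) * (i:ℝ) - (i:ℝ) ^ 2) with hC5
  set C6 := ∑ i ∈ Finset.range (ℓ+1),
      ((1 - 2 * (Real.sqrt 2 - 1) / (ℓ:ℝ)) * ((ℓ:ℝ) + 1 + (ℓ:ℝ) * (i:ℝ) - (i:ℝ) ^ 2)
        + 2 * (Real.sqrt 2 - 1) / (ℓ:ℝ) * ((ℓ:ℝ) + 2) ^ 2 / 4) with hC6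
  rw [sumLc2] at hC1
  rw [sumLd2] at hC2
  rw [sumLcc] at hC3
  rw [sumLcd] at hC4
  rw [sumLc] at hC5
  rw [sumLd] at hC6
  push_cast [Nat.cast_sub hℓ] at hC1 hC2 hC3 hC4 hC5 hC6
  have hCC : C5 ^ 2 * C6 ^ 2 ≠ 0 :=
    mul_ne_zero (pow_ne_zero 2 hc.ne') (pow_ne_zero 2 hd.ne')
  rw [div_div_eq_mul_div, ← mul_div_assoc, div_eq_div_iff hDne hCC]
  rw [hC1, hC2, hC3, hC4, hC5, hC6]
  unfold NYaux DYaux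
  generalize Real.sqrt 2 = t
  field_simp [hx0.ne']
  ring
end

section
/- For every natural number ℓ ≥ 10, with c_j = ℓ + (ℓ-1)j - j² (0 ≤ j ≤ ℓ-1) and d_j = (1-λ)(ℓ+1+ℓj-j²) + λ(ℓ+2)²/4 (0 ≤ j ≤ ℓ), λ = 2(√2-1)/ℓ, one has (∑_{i=0}^{ℓ-1} c_i)²·(∑_{i=0}^{ℓ} d_i)² > ℓ¹²/1296. -/
lemma sum_id_real (n : ℕ) : ∑ i ∈ Finset.range n, (i : ℝ) = n * (n - 1) / 2 := by
  induction n with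
  | zero => simp
  | succ k ih => rw [Finset.sum_range_succ, ih]; push_cast; ring

lemma sum_sq_real (n : ℕ) :
    ∑ i ∈ Finset.range n, (i : ℝ) ^ 2 = n * (n - 1) * (2 * n - 1) / 6 := by
  induction n with
  | zero => simp
  | succ k ih => rw [Finset.sum_range_succ, ih]; push_cast; ring

theorem denominator_lower_bound (ℓ : ℕ) (hℓ : 10 ≤ ℓ) :
    let lam : ℝ := 2 * (Real.sqrt 2 - 1) / (ℓ : ℝ)
    let c : ℕ → ℝ := fun j => (ℓ : ℝ) + ((ℓ : ℝ) - 1) * (j : ℝ) - (j : ℝ) ^ 2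
    let d : ℕ → ℝ := fun j =>
      (1 - lam) * ((ℓ : ℝ) + 1 + (ℓ : ℝ) * (j : ℝ) - (j : ℝ) ^ 2) + lam * ((ℓ : ℝ) + 2) ^ 2 / 4
    (∑ i ∈ Finset.range ℓ, c i) ^ 2 * (∑ i ∈ Finset.range (ℓ + 1), d i) ^ 2 >
      (ℓ : ℝ) ^ 12 / 1296 := by
  intro lam c d
  set L : ℝ := (ℓ : ℝ) with hL
  have hL10 : (10 : ℝ) ≤ L := by rw [hL]; exact_mod_cast hℓ
  have hLpos : 0 < L := by linarith
  have hlam_nonneg : 0 ≤ lam := by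
    have h2 : (1 : ℝ) ≤ Real.sqrt 2 := by
      rw [show (1:ℝ) = Real.sqrt 1 by simp]
      exact Real.sqrt_le_sqrt (by norm_num)
    have : 0 ≤ 2 * (Real.sqrt 2 - 1) := by linarith
    exact div_nonneg this hLpos.le
  have hc : ∑ i ∈ Finset.range ℓ, c i = L * (L + 1) * (L + 2) / 6 := by
    simp only [c, Finset.sum_sub_distrib, Finset.sum_add_distrib, ← Finset.mul_sum,
      Finset.sum_const, Finset.card_range, sum_id_real, sum_sq_real, nsmul_eq_mul, ← hL]
    ring
  have hd : ∑ i ∈ Finset.range (ℓ + 1), d i =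
      (1 - lam) * ((L + 1) * (L + 2) * (L + 3) / 6) + lam * ((L + 1) * (L + 2) ^ 2 / 4) := by
    simp only [d, Finset.sum_add_distrib, ← Finset.mul_sum, Finset.sum_sub_distrib,
      Finset.sum_const, Finset.card_range, sum_id_real, sum_sq_real, nsmul_eq_mul, ← hL]
    push_cast
    ring
  have h1 : L ^ 3 / 6 < ∑ i ∈ Finset.range ℓ, c i := by
    rw [hc]; nlinarith
  have h2 : L ^ 3 / 6 < ∑ i ∈ Finset.range (ℓ + 1), d i := by
    rw [hd]
    have key : (L + 1) * (L + 2) * (L + 3) / 6 ≤ (L + 1) * (L + 2) ^ 2 / 4 := by nlinarith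
    nlinarith [mul_nonneg hlam_nonneg (sub_nonneg.mpr key)]
  have h0 : 0 < L ^ 3 / 6 := by positivity
  have e : L ^ 12 / 1296 = (L ^ 3 / 6) ^ 2 * (L ^ 3 / 6) ^ 2 := by ring
  rw [gt_iff_lt, e]
  exact mul_lt_mul'' (pow_lt_pow_left₀ h1 h0.le (by norm_num))
    (pow_lt_pow_left₀ h2 h0.le (by norm_num)) (by positivity) (by positivity)
end
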